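/- Let n be a positive integer and let g_{ij} (for i < j in Fin n) be real numbers satisfying g_{il} + g_{jk} > g_{ik} + g_{jl} for all i < j < k < l and g_{il} > g_{ik} + g_{kl} for all i < k < l. Let v : Fin n → ℝ satisfy vⱼ − vᵢ ≥ g_{ij} for all i < j, and let E(v) = { {i,j} | i < j, vⱼ − vᵢ = g_{ij} } be the set of tight edges. Then E(v) contains no transitive pair of edges (no i < j < k with both {i,j} and {j,k} in E(v)) and no crossing pair of edges (no i < j < k < l with both {i,k} and {j,l} in E(v)). -/
import Mathlib

/-- If the parameters `g` satisfy the strict Monge-type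
conditions, then the tight-edge graph of any feasible point of the
one-dimensional polyhedron of constrained expansions contains no transitive
pair of edges and no crossing pair of edges. -/
theorem tight_graph_no_transitive_no_crossing
    (n : ℕ) (hn : 0 < n) (g : Fin n → Fin n → ℝ)
    (hmonge : ∀ i j k l : Fin n, i < j → j < k → k < l →
      g i k + g j l < g i l + g j k)
    (htri : ∀ i k l : Fin n, i < k → k < l → g i k + g k l < g i l)
    (v : Fin n → ℝ)
    (hfeas : ∀ i j : Fin n, i < j → g i j ≤ v j - v i) :
    (∀ i j k : Fin n, i < j → j < k →
      ¬ (v j - v i = g i j ∧ v k - v j = g j k)) ∧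
    (∀ i j k l : Fin n, i < j → j < k → k < l →
      ¬ (v k - v i = g i k ∧ v l - v j = g j l)) := by
  constructor
  · rintro i j k hij hjk ⟨h1, h2⟩
    have := htri i j k hij hjk
    have := hfeas i k (hij.trans hjk)
    linarith
  · rintro i j k l hij hjk hkl ⟨h1, h2⟩
    have := hmonge i j k l hij hjk hkl
    have := hfeas i l (hij.trans (hjk.trans hkl))
    have := hfeas j k hjk
    linarith
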